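/- Set Δ := Σ_{t=0}^{T−1} g_t and ξ_t := g_t − ∇f(w_t). Assume η ≤ 1/(24TL) and that E[⟨ξ_t, ∇f(w_s)⟩] = 0 whenever 0 ≤ t < s ≤ T−1. Then for every constant c with 0 < c ≤ 1/2 − 8η²T²L²: E[ −η·⟨∇f(w_0), Δ⟩ + (η²L/2)·‖Δ‖² ] ≤ −cTη·E[‖∇f(w_0)‖²] + (η²TL/2)·(1 + 4ηTL)·χ². -/

import Mathlib

/-!
In `L²(Ω; E)` write `Gₜ = ∇f(wₜ)` and `ξₜ = gₜ - Gₜ`. Unbiasedness makes `ξₜ` orthogonal to every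
`ℱₜ`-measurable square-integrable variable, so the noises are pairwise orthogonal and orthogonal to
the earlier gradients; orthogonality to the later gradients is assumed. Hence
`⟪G₀, Δ⟫ = ∑ₜ ⟪G₀, Gₜ⟫ = ∑ₜ (‖G₀‖² + ‖Gₜ‖² - ‖G₀ - Gₜ‖²) / 2`, and every partial sum of the `gₛ`
has squared norm at most `T (∑ₜ ‖Gₜ‖² + χ²)`. Smoothness bounds the drift `‖G₀ - Gₜ‖` by
`Lη ‖∑_{s<t} gₛ‖`, so the drift and the quadratic term together cost a fraction
`(ηTL)² + ηTL < 1` of the `∑ₜ ‖Gₜ‖²` gained, leaving `-(Tη/2) ‖G₀‖²` plus the noise term.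
-/

open MeasureTheory Finset
open scoped RealInnerProductSpace NNReal ENNReal

section Hilbert

variable {ι H : Type*} [NormedAddCommGroup H] [InnerProductSpace ℝ H]

theorem norm_sum_sq_le_card_mul_sum_norm_sq {F : Type*} [SeminormedAddCommGroup F]
    (s : Finset ι) (x : ι → F) : ‖∑ i ∈ s, x i‖ ^ 2 ≤ #s * ∑ i ∈ s, ‖x i‖ ^ 2 :=
  (pow_le_pow_left₀ (norm_nonneg _) (norm_sum_le s x) 2).trans sq_sum_le_card_mul_sum_sq

theorem norm_sum_sq_eq_sum_norm_sq_of_inner_eq_zero {s : Finset ι} {x : ι → H}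
    (hx : ∀ i ∈ s, ∀ j ∈ s, i ≠ j → ⟪x i, x j⟫ = 0) :
    ‖∑ i ∈ s, x i‖ ^ 2 = ∑ i ∈ s, ‖x i‖ ^ 2 := by
  rw [← real_inner_self_eq_norm_sq, sum_inner]
  refine sum_congr rfl fun i hi => ?_
  rw [inner_sum, sum_eq_single_of_mem i hi fun j hj hji => hx i hi j hj hji.symm,
    real_inner_self_eq_norm_sq]

theorem norm_sum_sq_le_card_mul_of_orthogonal_noise {s : Finset ι} {G g : ι → H} {χ : ℝ}
    (hGξ : ∀ i ∈ s, ∀ j ∈ s, ⟪G i, g j - G j⟫ = 0)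
    (hξξ : ∀ i ∈ s, ∀ j ∈ s, i ≠ j → ⟪g i - G i, g j - G j⟫ = 0)
    (hvar : ∀ i ∈ s, ‖g i - G i‖ ^ 2 ≤ χ ^ 2) :
    ‖∑ i ∈ s, g i‖ ^ 2 ≤ #s * (∑ i ∈ s, ‖G i‖ ^ 2 + χ ^ 2) := by
  have hsplit : ∑ i ∈ s, g i = ∑ i ∈ s, G i + ∑ i ∈ s, (g i - G i) := by
    rw [← sum_add_distrib]; simp
  have hcross : ⟪∑ i ∈ s, G i, ∑ j ∈ s, (g j - G j)⟫ = 0 := by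
    simp only [sum_inner, inner_sum]
    exact sum_eq_zero fun j hj => sum_eq_zero fun i hi => hGξ i hi j hj
  have hnoise : ‖∑ i ∈ s, (g i - G i)‖ ^ 2 ≤ #s * χ ^ 2 := by
    rw [norm_sum_sq_eq_sum_norm_sq_of_inner_eq_zero hξξ]
    simpa using sum_le_sum hvar
  rw [hsplit, norm_add_sq_real, hcross, mul_zero, add_zero, mul_add]
  exact add_le_add (norm_sum_sq_le_card_mul_sum_norm_sq s G) hnoise

theorem inner_sum_range_eq_of_orthogonal_noise {G g : ℕ → H} {T : ℕ}
    (hGξ : ∀ t < T, ⟪G 0, g t - G t⟫ = 0) :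
    ⟪G 0, ∑ t ∈ range T, g t⟫
      = (T * ‖G 0‖ ^ 2 + ∑ t ∈ range T, ‖G t‖ ^ 2 - ∑ t ∈ range T, ‖G 0 - G t‖ ^ 2) / 2 := by
  have hterm : ∀ t < T, ⟪G 0, g t⟫ = (‖G 0‖ ^ 2 + ‖G t‖ ^ 2 - ‖G 0 - G t‖ ^ 2) / 2 := by
    intro t ht
    have h := hGξ t ht
    rw [inner_sub_right] at h
    linarith [norm_sub_sq_real (G 0) (G t)]
  rw [inner_sum, sum_congr rfl fun t ht => hterm t (mem_range.mp ht), ← sum_div,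
    sum_sub_distrib, sum_add_distrib, sum_const, card_range, nsmul_eq_mul]

theorem norm_sum_range_sq_le_of_orthogonal_noise {G g : ℕ → H} {T : ℕ} {χ : ℝ}
    (hGξ : ∀ s < T, ∀ t < T, ⟪G s, g t - G t⟫ = 0)
    (hξξ : ∀ s t, s < t → t < T → ⟪g s - G s, g t - G t⟫ = 0)
    (hvar : ∀ t < T, ‖g t - G t‖ ^ 2 ≤ χ ^ 2) {t : ℕ} (ht : t ≤ T) :
    ‖∑ s ∈ range t, g s‖ ^ 2 ≤ T * (∑ s ∈ range T, ‖G s‖ ^ 2 + χ ^ 2) := by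
  have hlt : ∀ s ∈ range t, s < T := fun s hs => (mem_range.mp hs).trans_le ht
  have hξξ' : ∀ i ∈ range t, ∀ j ∈ range t, i ≠ j → ⟪g i - G i, g j - G j⟫ = 0 := by
    intro i hi j hj hij
    rcases hij.lt_or_gt with hij | hji
    · exact hξξ i j hij (hlt j hj)
    · rw [real_inner_comm]; exact hξξ j i hji (hlt i hi)
  calc ‖∑ s ∈ range t, g s‖ ^ 2 ≤ #(range t) * (∑ s ∈ range t, ‖G s‖ ^ 2 + χ ^ 2) :=
        norm_sum_sq_le_card_mul_of_orthogonal_noise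
          (fun i hi j hj => hGξ i (hlt i hi) j (hlt j hj)) hξξ' fun i hi => hvar i (hlt i hi)
    _ ≤ T * (∑ s ∈ range T, ‖G s‖ ^ 2 + χ ^ 2) := by
        rw [card_range]
        gcongr

theorem descent_le_of_orthogonal_noise {G g : ℕ → H} {T : ℕ} {η L χ : ℝ}
    (hη : 0 ≤ η) (hL : 0 ≤ L) (hηTL : η * T * L ≤ 1 / 2)
    (hGξ : ∀ s < T, ∀ t < T, ⟪G s, g t - G t⟫ = 0)
    (hξξ : ∀ s t, s < t → t < T → ⟪g s - G s, g t - G t⟫ = 0)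
    (hvar : ∀ t < T, ‖g t - G t‖ ^ 2 ≤ χ ^ 2)
    (hdrift : ∀ t < T, ‖G 0 - G t‖ ≤ L * η * ‖∑ s ∈ range t, g s‖) :
    -η * ⟪G 0, ∑ t ∈ range T, g t⟫ + η ^ 2 * L / 2 * ‖∑ t ∈ range T, g t‖ ^ 2
      ≤ -(T * η / 2) * ‖G 0‖ ^ 2 + η ^ 2 * T * L / 2 * (1 + η * T * L) * χ ^ 2 := by
  set S := ∑ t ∈ range T, ‖G t‖ ^ 2
  have hpartial {t : ℕ} (ht : t ≤ T) : ‖∑ s ∈ range t, g s‖ ^ 2 ≤ T * (S + χ ^ 2) :=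
    norm_sum_range_sq_le_of_orthogonal_noise hGξ hξξ hvar ht
  have hdrift_sum : ∑ t ∈ range T, ‖G 0 - G t‖ ^ 2 ≤ T * ((L * η) ^ 2 * (T * (S + χ ^ 2))) := by
    calc ∑ t ∈ range T, ‖G 0 - G t‖ ^ 2
        ≤ ∑ t ∈ range T, (L * η) ^ 2 * ‖∑ s ∈ range t, g s‖ ^ 2 := by
          refine sum_le_sum fun t ht => ?_
          rw [← mul_pow]
          exact pow_le_pow_left₀ (norm_nonneg _) (hdrift t (mem_range.mp ht)) 2
      _ ≤ ∑ _t ∈ range T, (L * η) ^ 2 * (T * (S + χ ^ 2)) := by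
          gcongr with t ht
          exact hpartial (mem_range.mp ht).le
      _ = T * ((L * η) ^ 2 * (T * (S + χ ^ 2))) := by rw [sum_const, card_range, nsmul_eq_mul]
  have hu : (η * T * L) ^ 2 + η * T * L ≤ 1 := by
    nlinarith [mul_nonneg (mul_nonneg hη (Nat.cast_nonneg T)) hL]
  rw [inner_sum_range_eq_of_orthogonal_noise fun t ht => hGξ 0 (by omega) t ht]
  -- with `u = ηTL`, the coefficient of `S` in the bound is `(η / 2) (u² + u - 1) ≤ 0`
  nlinarith [mul_le_mul_of_nonneg_left hdrift_sum hη,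
    mul_le_mul_of_nonneg_left (hpartial le_rfl) (by positivity : 0 ≤ η ^ 2 * L),
    mul_nonneg hη (by positivity : 0 ≤ S)]

end Hilbert

section Lp

variable {Ω E : Type*} {mΩ : MeasurableSpace Ω} {μ : Measure Ω} [NormedAddCommGroup E]

theorem MeasureTheory.MemLp.toLp_finsetSum {ι : Type*} {p : ℝ≥0∞} [Fact (1 ≤ p)] (s : Finset ι)
    {f : ι → Ω → E} (hf : ∀ i, MemLp (f i) p μ) :
    (memLp_finsetSum s fun i _ => hf i).toLp (fun ω => ∑ i ∈ s, f i ω)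
      = ∑ i ∈ s, (hf i).toLp (f i) := by
  classical
  induction s using Finset.induction_on with
  | empty =>
    simp only [Finset.sum_empty]
    exact MemLp.toLp_zero _
  | insert i s hi ih =>
    simp only [Finset.sum_insert hi]
    rw [← ih, ← MemLp.toLp_add]
    rfl

theorem LipschitzWith.memLp_comp {F : Type*} [NormedAddCommGroup F] {p : ℝ≥0∞} [IsFiniteMeasure μ]
    {φ : E → F} {K : ℝ≥0} (hφ : LipschitzWith K φ) {X : Ω → E} (hX : MemLp X p μ) :
    MemLp (fun ω => φ (X ω)) p μ := by
  have h := (hφ.sub (LipschitzWith.const (φ 0))).comp_memLp (sub_self _) hX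
  convert h.add (memLp_const (φ 0)) using 1
  funext ω
  simp

theorem MeasureTheory.MemLp.norm_toLp_le_mul_norm_toLp {F : Type*} [NormedAddCommGroup F]
    {p : ℝ≥0∞} [Fact (1 ≤ p)] {f : Ω → E} {h : Ω → F} {c : ℝ} (hf : MemLp f p μ)
    (hh : MemLp h p μ) (hfh : ∀ᵐ ω ∂μ, ‖f ω‖ ≤ c * ‖h ω‖) :
    ‖hf.toLp f‖ ≤ c * ‖hh.toLp h‖ := by
  refine Lp.norm_le_mul_norm_of_ae_le_mul ?_
  filter_upwards [hf.coeFn_toLp, hh.coeFn_toLp, hfh] with ω hfω hhω hω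
  rwa [hfω, hhω]

end Lp

section L2

variable {Ω E : Type*} {m mΩ : MeasurableSpace Ω} {μ : Measure Ω}
  [NormedAddCommGroup E] [InnerProductSpace ℝ E]

section

variable {f g : Ω → E}

theorem MeasureTheory.MemLp.integrable_inner (hf : MemLp f 2 μ) (hg : MemLp g 2 μ) :
    Integrable (fun ω => ⟪f ω, g ω⟫) μ :=
  memLp_one_iff_integrable.mp ((innerSL ℝ).memLp_of_bilin 1 hf hg)

theorem MeasureTheory.MemLp.inner_toLp_toLp (hf : MemLp f 2 μ) (hg : MemLp g 2 μ) :
    ⟪hf.toLp f, hg.toLp g⟫ = ∫ ω, ⟪f ω, g ω⟫ ∂μ := by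
  rw [L2.inner_def]
  refine integral_congr_ae ?_
  filter_upwards [hf.coeFn_toLp, hg.coeFn_toLp] with ω hfω hgω
  rw [hfω, hgω]

theorem MeasureTheory.MemLp.norm_toLp_sq (hf : MemLp f 2 μ) :
    ‖hf.toLp f‖ ^ 2 = ∫ ω, ‖f ω‖ ^ 2 ∂μ := by
  simp only [← real_inner_self_eq_norm_sq, hf.inner_toLp_toLp hf]

end

variable [CompleteSpace E] [IsFiniteMeasure μ]

theorem integral_inner_sub_eq_zero_of_condExp_ae_eq (hm : m ≤ mΩ)
    {X Y Z : Ω → E} (hX : StronglyMeasurable[m] X) (hZ : StronglyMeasurable[m] Z)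
    (hX2 : MemLp X 2 μ) (hY2 : MemLp Y 2 μ) (hZ2 : MemLp Z 2 μ) (hYZ : μ[Y|m] =ᵐ[μ] Z) :
    ∫ ω, ⟪X ω, Y ω - Z ω⟫ ∂μ = 0 := by
  have hY := hY2.integrable one_le_two
  have hZ1 := hZ2.integrable one_le_two
  have hcond : μ[Y - Z|m] =ᵐ[μ] 0 := by
    filter_upwards [condExp_sub hY hZ1 m, hYZ] with ω hsub hYω
    rw [hsub, Pi.sub_apply, hYω, condExp_of_stronglyMeasurable hm hZ hZ1, sub_self, Pi.zero_apply]
  rw [← integral_condExp hm]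
  refine (integral_congr_ae ?_).trans (integral_zero _ _)
  filter_upwards [condExp_bilin_of_stronglyMeasurable_left (innerSL ℝ) hX
    (hX2.integrable_inner (hY2.sub hZ2)) (hY.sub hZ1), hcond] with ω hpull hω
  exact hpull.trans (by simp [hω])

theorem integral_descent_le_of_martingale_noise (ℱ : Filtration ℕ mΩ) {G g : ℕ → Ω → E} {T : ℕ}
    {η L χ : ℝ} (hη : 0 ≤ η) (hL : 0 ≤ L) (hηTL : η * T * L ≤ 1 / 2)
    (hG_meas : ∀ t, StronglyMeasurable[ℱ t] (G t))
    (hg_meas : ∀ t, StronglyMeasurable[ℱ (t + 1)] (g t))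
    (hG_L2 : ∀ t, MemLp (G t) 2 μ) (hg_L2 : ∀ t, MemLp (g t) 2 μ)
    (h_unbiased : ∀ t < T, μ[g t | ℱ t] =ᵐ[μ] G t)
    (h_var : ∀ t < T, ∫ ω, ‖g t ω - G t ω‖ ^ 2 ∂μ ≤ χ ^ 2)
    (h_orth : ∀ t s, t < s → s < T → ∫ ω, ⟪g t ω - G t ω, G s ω⟫ ∂μ = 0)
    (h_drift : ∀ t < T, ∀ᵐ ω ∂μ, ‖G 0 ω - G t ω‖ ≤ L * η * ‖∑ s ∈ range t, g s ω‖) :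
    ∫ ω, (-η * ⟪G 0 ω, ∑ t ∈ range T, g t ω⟫ + η ^ 2 * L / 2 * ‖∑ t ∈ range T, g t ω‖ ^ 2) ∂μ
      ≤ -(T * η / 2) * ∫ ω, ‖G 0 ω‖ ^ 2 ∂μ
        + η ^ 2 * T * L / 2 * (1 + η * T * L) * χ ^ 2 := by
  have hξ_L2 : ∀ t, MemLp (g t - G t) 2 μ := fun t => (hg_L2 t).sub (hG_L2 t)
  have hsum_L2 : ∀ n, MemLp (fun ω => ∑ t ∈ range n, g t ω) 2 μ :=
    fun n => memLp_finsetSum _ fun t _ => hg_L2 t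
  have hξ_toLp : ∀ t, (hg_L2 t).toLp (g t) - (hG_L2 t).toLp (G t) = (hξ_L2 t).toLp _ :=
    fun t => (MemLp.toLp_sub _ _).symm
  have hsum_toLp : ∀ n, ∑ t ∈ range n, (hg_L2 t).toLp (g t) = (hsum_L2 n).toLp _ :=
    fun n => (MemLp.toLp_finsetSum _ hg_L2).symm
  have hnoise : ∀ t < T, ∀ X : Ω → E, StronglyMeasurable[ℱ t] X → MemLp X 2 μ →
      ∫ ω, ⟪X ω, g t ω - G t ω⟫ ∂μ = 0 := fun t ht X hX hX2 =>
    integral_inner_sub_eq_zero_of_condExp_ae_eq (ℱ.le t) hX (hG_meas t) hX2 (hg_L2 t) (hG_L2 t)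
      (h_unbiased t ht)
  have key := descent_le_of_orthogonal_noise (G := fun t => (hG_L2 t).toLp (G t))
    (g := fun t => (hg_L2 t).toLp (g t)) (χ := χ) hη hL hηTL ?_ ?_ ?_ ?_
  · rwa [hsum_toLp, MemLp.inner_toLp_toLp, MemLp.norm_toLp_sq, MemLp.norm_toLp_sq,
      ← integral_const_mul, ← integral_const_mul, ← integral_add] at key
    · exact ((hG_L2 0).integrable_inner (hsum_L2 T)).const_mul _
    · exact ((hsum_L2 T).integrable_norm_pow two_ne_zero).const_mul _
  · intro s hs t ht
    rw [hξ_toLp, MemLp.inner_toLp_toLp]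
    rcases le_or_gt s t with hst | hts
    · exact hnoise t ht _ ((hG_meas s).mono (ℱ.mono hst)) (hG_L2 s)
    · simpa only [real_inner_comm, Pi.sub_apply] using h_orth t s hts hs
  · intro s t hst ht
    rw [hξ_toLp, hξ_toLp, MemLp.inner_toLp_toLp]
    exact hnoise t ht _ (((hg_meas s).sub ((hG_meas s).mono (ℱ.mono s.le_succ))).mono
      (ℱ.mono hst)) (hξ_L2 s)
  · intro t ht
    rw [hξ_toLp, MemLp.norm_toLp_sq]
    exact h_var t ht
  · intro t ht
    rw [← MemLp.toLp_sub, hsum_toLp]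
    exact MemLp.norm_toLp_le_mul_norm_toLp _ _ (h_drift t ht)

end L2

theorem norm_sub_le_mul_norm_sum_of_update {M F : Type*} [SeminormedAddCommGroup M]
    [NormedSpace ℝ M] [SeminormedAddCommGroup F] {φ : M → F} {K η : ℝ}
    (hφ : ∀ x y, ‖φ x - φ y‖ ≤ K * ‖x - y‖) (hη : 0 ≤ η) {w g : ℕ → M}
    (hupd : ∀ t, w (t + 1) = w t - η • g t) (t : ℕ) :
    ‖φ (w 0) - φ (w t)‖ ≤ K * η * ‖∑ s ∈ range t, g s‖ := by
  have hdisp : w 0 - w t = η • ∑ s ∈ range t, g s := by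
    rw [← sum_range_sub' w t, smul_sum]
    exact sum_congr rfl fun s _ => by rw [hupd s, sub_sub_cancel]
  calc ‖φ (w 0) - φ (w t)‖ ≤ K * ‖w 0 - w t‖ := hφ _ _
    _ = K * η * ‖∑ s ∈ range t, g s‖ := by
      rw [hdisp, norm_smul, Real.norm_of_nonneg hη, mul_assoc]

theorem gatta_lemma3_general
    {E : Type*} [NormedAddCommGroup E] [InnerProductSpace ℝ E] [FiniteDimensional ℝ E]
    {Ω : Type*} {mΩ : MeasurableSpace Ω} {μ : Measure Ω} [IsProbabilityMeasure μ]
    (ℱ : Filtration ℕ mΩ)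
    (f : E → ℝ) (L : ℝ) (hL : 0 < L)
    (hsmooth : ∀ x y : E, ‖gradient f x - gradient f y‖ ≤ L * ‖x - y‖)
    (T : ℕ) (hT : 1 ≤ T) (η : ℝ) (hη : 0 < η) (χ : ℝ)
    (w g : ℕ → Ω → E)
    (hupd : ∀ t, w (t + 1) = fun ω => w t ω - η • g t ω)
    (hw_meas : ∀ t, StronglyMeasurable[ℱ t] (w t))
    (hg_meas : ∀ t, StronglyMeasurable[ℱ (t + 1)] (g t))
    (hw_L2 : ∀ t, MemLp (w t) 2 μ)
    (hg_L2 : ∀ t, MemLp (g t) 2 μ)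
    (h_unbiased : ∀ t, μ[g t | ℱ t] =ᵐ[μ] fun ω => gradient f (w t ω))
    (h_var : ∀ t, ∫ ω, ‖g t ω - gradient f (w t ω)‖ ^ 2 ∂μ ≤ χ ^ 2)
    (h_orth : ∀ t s : ℕ, t < s → s < T →
      ∫ ω, ⟪g t ω - gradient f (w t ω), gradient f (w s ω)⟫ ∂μ = 0)
    (hη_small : η ≤ 1 / (24 * T * L))
    (c : ℝ) (hc1 : c ≤ 1 / 2 - 8 * η ^ 2 * T ^ 2 * L ^ 2) :
    ∫ ω, (-η * ⟪gradient f (w 0 ω), ∑ t ∈ Finset.range T, g t ω⟫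
        + η ^ 2 * L / 2 * ‖∑ t ∈ Finset.range T, g t ω‖ ^ 2) ∂μ
      ≤ -(c * T * η) * ∫ ω, ‖gradient f (w 0 ω)‖ ^ 2 ∂μ
        + η ^ 2 * T * L / 2 * (1 + 4 * η * T * L) * χ ^ 2 := by
  have hlip : LipschitzWith (Real.toNNReal L) (gradient f) :=
    LipschitzWith.of_dist_le_mul fun x y => by simpa [dist_eq_norm, hL.le] using hsmooth x y
  have hηTL : η * T * L ≤ 1 / 24 := by
    rw [le_div_iff₀ (by positivity)] at hη_small
    linarith
  have hc : c ≤ 1 / 2 := by nlinarith [sq_nonneg (η * T * L)]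
  have hgrad_sq : 0 ≤ ∫ ω, ‖gradient f (w 0 ω)‖ ^ 2 ∂μ := integral_nonneg fun ω => sq_nonneg _
  refine (integral_descent_le_of_martingale_noise ℱ (G := fun t ω => gradient f (w t ω))
    hη.le hL.le (by linarith) (fun t => hlip.continuous.comp_stronglyMeasurable (hw_meas t))
    hg_meas (fun t => hlip.memLp_comp (hw_L2 t)) hg_L2 (fun t _ => h_unbiased t)
    (fun t _ => h_var t) h_orth fun t _ => ae_of_all _ fun ω =>
      norm_sub_le_mul_norm_sum_of_update (w := (w · ω)) (g := (g · ω)) hsmooth hη.le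
        (fun t => congrFun (hupd t) ω) t).trans ?_
  gcongr
  · nlinarith [mul_nonneg (Nat.cast_nonneg T : (0 : ℝ) ≤ T) hη.le]
  · linarith

/-- **Lemma 3 (GATTA).** Per-round descent estimate for one epoch of local SGD:
if `η ≤ 1/(24TL)` and the noises are orthogonal in `L²` to gradients at later steps, then
for every `c` with `0 < c ≤ 1/2 − 8η²T²L²`,
`E[−η⟨∇f(w₀), Δ⟩ + (η²L/2)‖Δ‖²] ≤ −cTη·E[‖∇f(w₀)‖²] + (η²TL/2)(1 + 4ηTL)χ²`. -/
theorem gatta_lemma3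
    {E : Type*} [NormedAddCommGroup E] [InnerProductSpace ℝ E] [FiniteDimensional ℝ E]
    {Ω : Type*} {mΩ : MeasurableSpace Ω} {μ : Measure Ω} [IsProbabilityMeasure μ]
    (ℱ : Filtration ℕ mΩ)
    (f : E → ℝ) (L : ℝ) (hL : 0 < L)
    (hdiff : Differentiable ℝ f)
    (hsmooth : ∀ x y : E, ‖gradient f x - gradient f y‖ ≤ L * ‖x - y‖)
    (T : ℕ) (hT : 1 ≤ T) (η : ℝ) (hη : 0 < η) (χ : ℝ) (hχ : 0 ≤ χ)
    (w g : ℕ → Ω → E)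
    (hupd : ∀ t, w (t + 1) = fun ω => w t ω - η • g t ω)
    (hw_meas : ∀ t, StronglyMeasurable[ℱ t] (w t))
    (hg_meas : ∀ t, StronglyMeasurable[ℱ (t + 1)] (g t))
    (hw_L2 : ∀ t, MemLp (w t) 2 μ)
    (hg_L2 : ∀ t, MemLp (g t) 2 μ)
    (h_unbiased : ∀ t, μ[g t | ℱ t] =ᵐ[μ] fun ω => gradient f (w t ω))
    (h_var : ∀ t, ∫ ω, ‖g t ω - gradient f (w t ω)‖ ^ 2 ∂μ ≤ χ ^ 2)
    (h_orth : ∀ t s : ℕ, t < s → s < T →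
      ∫ ω, ⟪g t ω - gradient f (w t ω), gradient f (w s ω)⟫ ∂μ = 0)
    (hη_small : η ≤ 1 / (24 * T * L))
    (c : ℝ) (hc0 : 0 < c) (hc1 : c ≤ 1 / 2 - 8 * η ^ 2 * T ^ 2 * L ^ 2) :
    ∫ ω, (-η * ⟪gradient f (w 0 ω), ∑ t ∈ Finset.range T, g t ω⟫
        + η ^ 2 * L / 2 * ‖∑ t ∈ Finset.range T, g t ω‖ ^ 2) ∂μ
      ≤ -(c * T * η) * ∫ ω, ‖gradient f (w 0 ω)‖ ^ 2 ∂μ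
        + η ^ 2 * T * L / 2 * (1 + 4 * η * T * L) * χ ^ 2 :=
  gatta_lemma3_general ℱ f L hL hsmooth T hT η hη χ w g hupd hw_meas hg_meas hw_L2 hg_L2 h_unbiased
    h_var h_orth hη_small c hc1
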